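/- arXiv:2502.20847 — 3 statements merged into one kernel-verified Lean document; each statement's English description precedes it below -/
import Mathlib

section
/- If X and Y are i.i.d. real random variables and f, g : ℝ → ℝ≥0 are bounded nondecreasing functions, then Var[f(X)g(X)] ≥ Var[f(X)] · E[g(X)²]. -/
open MeasureTheory ProbabilityTheory

namespace VarMulAux

/-- canonical monomial on the triple product space -/
def mono3 (u v w : ℝ → ℝ) : ℝ × ℝ × ℝ → ℝ := fun p => u p.1 * (v p.2.1 * w p.2.2)

lemma integrable_of_bdd {α : Type*} [MeasurableSpace α] {ρ : Measure α} [IsFiniteMeasure ρ]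
    {u : α → ℝ} (hm : AEStronglyMeasurable u ρ) {C : ℝ} (hb : ∀ x, |u x| ≤ C) :
    Integrable u ρ :=
  (integrable_const C).mono' hm (Filter.Eventually.of_forall (fun x => by
    simpa [Real.norm_eq_abs] using hb x))

lemma measurable_mono3 {u v w : ℝ → ℝ} (hu : Measurable u) (hv : Measurable v)
    (hw : Measurable w) : Measurable (mono3 u v w) :=
  (hu.comp measurable_fst).mul ((hv.comp (measurable_fst.comp measurable_snd)).mul
    (hw.comp (measurable_snd.comp measurable_snd)))

lemma integrable_mono3 {μ : Measure ℝ} [IsProbabilityMeasure μ] {u v w : ℝ → ℝ}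
    (hu : Measurable u) (hv : Measurable v) (hw : Measurable w)
    {Cu Cv Cw : ℝ} (hub : ∀ x, |u x| ≤ Cu) (hvb : ∀ x, |v x| ≤ Cv) (hwb : ∀ x, |w x| ≤ Cw) :
    Integrable (mono3 u v w) (μ.prod (μ.prod μ)) := by
  have hCu : 0 ≤ Cu := le_trans (abs_nonneg _) (hub 0)
  have hCv : 0 ≤ Cv := le_trans (abs_nonneg _) (hvb 0)
  have hCw : 0 ≤ Cw := le_trans (abs_nonneg _) (hwb 0)
  refine integrable_of_bdd (measurable_mono3 hu hv hw).aestronglyMeasurable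
    (C := Cu * (Cv * Cw)) ?_
  intro p
  rw [mono3, abs_mul, abs_mul]
  exact mul_le_mul (hub _) (mul_le_mul (hvb _) (hwb _) (abs_nonneg _) hCv)
    (mul_nonneg (abs_nonneg _) (abs_nonneg _)) hCu

lemma integral_mono3 (μ : Measure ℝ) [IsProbabilityMeasure μ] (u v w : ℝ → ℝ) :
    ∫ p, mono3 u v w p ∂(μ.prod (μ.prod μ))
      = (∫ x, u x ∂μ) * ((∫ x, v x ∂μ) * (∫ x, w x ∂μ)) := by
  simp only [mono3]
  exact (integral_prod_mul u fun q : ℝ × ℝ => v q.1 * w q.2).trans (by rw [integral_prod_mul])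

lemma pat12 {μ : Measure ℝ} [IsProbabilityMeasure μ] {u : ℝ → ℝ} (hu : Measurable u) {Cu : ℝ} (hub : ∀ x, |u x| ≤ Cu) :
    Integrable (fun p : ℝ × ℝ × ℝ => (u p.1 - u p.2.1)^2) (μ.prod (μ.prod μ)) ∧
    ∫ p : ℝ × ℝ × ℝ, (u p.1 - u p.2.1)^2 ∂(μ.prod (μ.prod μ)) = 2*(∫ x, u x^2 ∂μ) - 2*(∫ x, u x ∂μ)^2 := by
  have one_b : ∀ x : ℝ, |(fun _ : ℝ => (1:ℝ)) x| ≤ 1 := fun x => by norm_num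
  have usq_b : ∀ x, |(fun x => u x^2) x| ≤ Cu^2 := fun x => by
    simpa [abs_pow] using pow_le_pow_left₀ (abs_nonneg _) (hub x) 2
  have hA := integrable_mono3 (μ := μ) (hu.pow_const 2) measurable_const measurable_const usq_b one_b one_b
  have hB := integrable_mono3 (μ := μ) hu hu measurable_const hub hub one_b
  have hC := integrable_mono3 (μ := μ) measurable_const (hu.pow_const 2) measurable_const one_b usq_b one_b
  have hAB : Integrable (fun p => mono3 (fun x => u x^2) (fun _ : ℝ => (1:ℝ)) (fun _ : ℝ => (1:ℝ)) p - 2 * mono3 u u (fun _ : ℝ => (1:ℝ)) p) (μ.prod (μ.prod μ)) :=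
    hA.sub (hB.const_mul 2)
  have hexp : (fun p : ℝ × ℝ × ℝ => (u p.1 - u p.2.1)^2)
      = fun p => (mono3 (fun x => u x^2) (fun _ : ℝ => (1:ℝ)) (fun _ : ℝ => (1:ℝ)) p - 2 * mono3 u u (fun _ : ℝ => (1:ℝ)) p) + mono3 (fun _ : ℝ => (1:ℝ)) (fun x => u x^2) (fun _ : ℝ => (1:ℝ)) p := by
    funext p; simp only [mono3]; ring
  constructor
  · rw [hexp]; exact hAB.add hC
  · rw [hexp, integral_add hAB hC, integral_sub hA (hB.const_mul 2),
      integral_const_mul, integral_mono3, integral_mono3, integral_mono3]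
    simp only [integral_const, probReal_univ, ENNReal.toReal_one, smul_eq_mul, one_mul, mul_one]
    ring

lemma pat13 {μ : Measure ℝ} [IsProbabilityMeasure μ] {u : ℝ → ℝ} (hu : Measurable u) {Cu : ℝ} (hub : ∀ x, |u x| ≤ Cu) :
    Integrable (fun p : ℝ × ℝ × ℝ => (u p.1 - u p.2.2)^2) (μ.prod (μ.prod μ)) ∧
    ∫ p : ℝ × ℝ × ℝ, (u p.1 - u p.2.2)^2 ∂(μ.prod (μ.prod μ)) = 2*(∫ x, u x^2 ∂μ) - 2*(∫ x, u x ∂μ)^2 := by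
  have one_b : ∀ x : ℝ, |(fun _ : ℝ => (1:ℝ)) x| ≤ 1 := fun x => by norm_num
  have usq_b : ∀ x, |(fun x => u x^2) x| ≤ Cu^2 := fun x => by
    simpa [abs_pow] using pow_le_pow_left₀ (abs_nonneg _) (hub x) 2
  have hA := integrable_mono3 (μ := μ) (hu.pow_const 2) measurable_const measurable_const usq_b one_b one_b
  have hB := integrable_mono3 (μ := μ) hu measurable_const hu hub one_b hub
  have hC := integrable_mono3 (μ := μ) measurable_const measurable_const (hu.pow_const 2) one_b one_b usq_b
  have hAB : Integrable (fun p => mono3 (fun x => u x^2) (fun _ : ℝ => (1:ℝ)) (fun _ : ℝ => (1:ℝ)) p - 2 * mono3 u (fun _ : ℝ => (1:ℝ)) u p) (μ.prod (μ.prod μ)) :=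
    hA.sub (hB.const_mul 2)
  have hexp : (fun p : ℝ × ℝ × ℝ => (u p.1 - u p.2.2)^2)
      = fun p => (mono3 (fun x => u x^2) (fun _ : ℝ => (1:ℝ)) (fun _ : ℝ => (1:ℝ)) p - 2 * mono3 u (fun _ : ℝ => (1:ℝ)) u p) + mono3 (fun _ : ℝ => (1:ℝ)) (fun _ : ℝ => (1:ℝ)) (fun x => u x^2) p := by
    funext p; simp only [mono3]; ring
  constructor
  · rw [hexp]; exact hAB.add hC
  · rw [hexp, integral_add hAB hC, integral_sub hA (hB.const_mul 2),
      integral_const_mul, integral_mono3, integral_mono3, integral_mono3]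
    simp only [integral_const, probReal_univ, ENNReal.toReal_one, smul_eq_mul, one_mul, mul_one]
    ring

lemma pat23 {μ : Measure ℝ} [IsProbabilityMeasure μ] {u : ℝ → ℝ} (hu : Measurable u) {Cu : ℝ} (hub : ∀ x, |u x| ≤ Cu) :
    Integrable (fun p : ℝ × ℝ × ℝ => (u p.2.1 - u p.2.2)^2) (μ.prod (μ.prod μ)) ∧
    ∫ p : ℝ × ℝ × ℝ, (u p.2.1 - u p.2.2)^2 ∂(μ.prod (μ.prod μ)) = 2*(∫ x, u x^2 ∂μ) - 2*(∫ x, u x ∂μ)^2 := by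
  have one_b : ∀ x : ℝ, |(fun _ : ℝ => (1:ℝ)) x| ≤ 1 := fun x => by norm_num
  have usq_b : ∀ x, |(fun x => u x^2) x| ≤ Cu^2 := fun x => by
    simpa [abs_pow] using pow_le_pow_left₀ (abs_nonneg _) (hub x) 2
  have hA := integrable_mono3 (μ := μ) measurable_const (hu.pow_const 2) measurable_const one_b usq_b one_b
  have hB := integrable_mono3 (μ := μ) measurable_const hu hu one_b hub hub
  have hC := integrable_mono3 (μ := μ) measurable_const measurable_const (hu.pow_const 2) one_b one_b usq_b
  have hAB : Integrable (fun p => mono3 (fun _ : ℝ => (1:ℝ)) (fun x => u x^2) (fun _ : ℝ => (1:ℝ)) p - 2 * mono3 (fun _ : ℝ => (1:ℝ)) u u p) (μ.prod (μ.prod μ)) :=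
    hA.sub (hB.const_mul 2)
  have hexp : (fun p : ℝ × ℝ × ℝ => (u p.2.1 - u p.2.2)^2)
      = fun p => (mono3 (fun _ : ℝ => (1:ℝ)) (fun x => u x^2) (fun _ : ℝ => (1:ℝ)) p - 2 * mono3 (fun _ : ℝ => (1:ℝ)) u u p) + mono3 (fun _ : ℝ => (1:ℝ)) (fun _ : ℝ => (1:ℝ)) (fun x => u x^2) p := by
    funext p; simp only [mono3]; ring
  constructor
  · rw [hexp]; exact hAB.add hC
  · rw [hexp, integral_add hAB hC, integral_sub hA (hB.const_mul 2),
      integral_const_mul, integral_mono3, integral_mono3, integral_mono3]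
    simp only [integral_const, probReal_univ, ENNReal.toReal_one, smul_eq_mul, one_mul, mul_one]
    ring

lemma pat123 {μ : Measure ℝ} [IsProbabilityMeasure μ] {u v : ℝ → ℝ} (hu : Measurable u) (hv : Measurable v)
    {Cu Cv : ℝ} (hub : ∀ x, |u x| ≤ Cu) (hvb : ∀ x, |v x| ≤ Cv) :
    Integrable (fun p : ℝ × ℝ × ℝ => (u p.1 - u p.2.1)^2 * v p.2.2^2) (μ.prod (μ.prod μ)) ∧
    ∫ p : ℝ × ℝ × ℝ, (u p.1 - u p.2.1)^2 * v p.2.2^2 ∂(μ.prod (μ.prod μ)) = (2*(∫ x, u x^2 ∂μ) - 2*(∫ x, u x ∂μ)^2) * (∫ x, v x^2 ∂μ) := by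
  have one_b : ∀ x : ℝ, |(fun _ : ℝ => (1:ℝ)) x| ≤ 1 := fun x => by norm_num
  have usq_b : ∀ x, |(fun x => u x^2) x| ≤ Cu^2 := fun x => by
    simpa [abs_pow] using pow_le_pow_left₀ (abs_nonneg _) (hub x) 2
  have vsq_b : ∀ x, |(fun x => v x^2) x| ≤ Cv^2 := fun x => by
    simpa [abs_pow] using pow_le_pow_left₀ (abs_nonneg _) (hvb x) 2
  have hA := integrable_mono3 (μ := μ) (hu.pow_const 2) measurable_const (hv.pow_const 2) usq_b one_b vsq_b
  have hB := integrable_mono3 (μ := μ) hu hu (hv.pow_const 2) hub hub vsq_b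
  have hC := integrable_mono3 (μ := μ) measurable_const (hu.pow_const 2) (hv.pow_const 2) one_b usq_b vsq_b
  have hAB : Integrable (fun p => mono3 (fun x => u x^2) (fun _ : ℝ => (1:ℝ)) (fun x => v x^2) p - 2 * mono3 u u (fun x => v x^2) p) (μ.prod (μ.prod μ)) :=
    hA.sub (hB.const_mul 2)
  have hexp : (fun p : ℝ × ℝ × ℝ => (u p.1 - u p.2.1)^2 * v p.2.2^2)
      = fun p => (mono3 (fun x => u x^2) (fun _ : ℝ => (1:ℝ)) (fun x => v x^2) p - 2 * mono3 u u (fun x => v x^2) p) + mono3 (fun _ : ℝ => (1:ℝ)) (fun x => u x^2) (fun x => v x^2) p := by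
    funext p; simp only [mono3]; ring
  constructor
  · rw [hexp]; exact hAB.add hC
  · rw [hexp, integral_add hAB hC, integral_sub hA (hB.const_mul 2),
      integral_const_mul, integral_mono3, integral_mono3, integral_mono3]
    simp only [integral_const, probReal_univ, ENNReal.toReal_one, smul_eq_mul, one_mul, mul_one]
    ring

lemma pat132 {μ : Measure ℝ} [IsProbabilityMeasure μ] {u v : ℝ → ℝ} (hu : Measurable u) (hv : Measurable v)
    {Cu Cv : ℝ} (hub : ∀ x, |u x| ≤ Cu) (hvb : ∀ x, |v x| ≤ Cv) :
    Integrable (fun p : ℝ × ℝ × ℝ => (u p.1 - u p.2.2)^2 * v p.2.1^2) (μ.prod (μ.prod μ)) ∧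
    ∫ p : ℝ × ℝ × ℝ, (u p.1 - u p.2.2)^2 * v p.2.1^2 ∂(μ.prod (μ.prod μ)) = (2*(∫ x, u x^2 ∂μ) - 2*(∫ x, u x ∂μ)^2) * (∫ x, v x^2 ∂μ) := by
  have one_b : ∀ x : ℝ, |(fun _ : ℝ => (1:ℝ)) x| ≤ 1 := fun x => by norm_num
  have usq_b : ∀ x, |(fun x => u x^2) x| ≤ Cu^2 := fun x => by
    simpa [abs_pow] using pow_le_pow_left₀ (abs_nonneg _) (hub x) 2
  have vsq_b : ∀ x, |(fun x => v x^2) x| ≤ Cv^2 := fun x => by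
    simpa [abs_pow] using pow_le_pow_left₀ (abs_nonneg _) (hvb x) 2
  have hA := integrable_mono3 (μ := μ) (hu.pow_const 2) (hv.pow_const 2) measurable_const usq_b vsq_b one_b
  have hB := integrable_mono3 (μ := μ) hu (hv.pow_const 2) hu hub vsq_b hub
  have hC := integrable_mono3 (μ := μ) measurable_const (hv.pow_const 2) (hu.pow_const 2) one_b vsq_b usq_b
  have hAB : Integrable (fun p => mono3 (fun x => u x^2) (fun x => v x^2) (fun _ : ℝ => (1:ℝ)) p - 2 * mono3 u (fun x => v x^2) u p) (μ.prod (μ.prod μ)) :=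
    hA.sub (hB.const_mul 2)
  have hexp : (fun p : ℝ × ℝ × ℝ => (u p.1 - u p.2.2)^2 * v p.2.1^2)
      = fun p => (mono3 (fun x => u x^2) (fun x => v x^2) (fun _ : ℝ => (1:ℝ)) p - 2 * mono3 u (fun x => v x^2) u p) + mono3 (fun _ : ℝ => (1:ℝ)) (fun x => v x^2) (fun x => u x^2) p := by
    funext p; simp only [mono3]; ring
  constructor
  · rw [hexp]; exact hAB.add hC
  · rw [hexp, integral_add hAB hC, integral_sub hA (hB.const_mul 2),
      integral_const_mul, integral_mono3, integral_mono3, integral_mono3]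
    simp only [integral_const, probReal_univ, ENNReal.toReal_one, smul_eq_mul, one_mul, mul_one]
    ring

lemma pat231 {μ : Measure ℝ} [IsProbabilityMeasure μ] {u v : ℝ → ℝ} (hu : Measurable u) (hv : Measurable v)
    {Cu Cv : ℝ} (hub : ∀ x, |u x| ≤ Cu) (hvb : ∀ x, |v x| ≤ Cv) :
    Integrable (fun p : ℝ × ℝ × ℝ => (u p.2.1 - u p.2.2)^2 * v p.1^2) (μ.prod (μ.prod μ)) ∧
    ∫ p : ℝ × ℝ × ℝ, (u p.2.1 - u p.2.2)^2 * v p.1^2 ∂(μ.prod (μ.prod μ)) = (2*(∫ x, u x^2 ∂μ) - 2*(∫ x, u x ∂μ)^2) * (∫ x, v x^2 ∂μ) := by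
  have one_b : ∀ x : ℝ, |(fun _ : ℝ => (1:ℝ)) x| ≤ 1 := fun x => by norm_num
  have usq_b : ∀ x, |(fun x => u x^2) x| ≤ Cu^2 := fun x => by
    simpa [abs_pow] using pow_le_pow_left₀ (abs_nonneg _) (hub x) 2
  have vsq_b : ∀ x, |(fun x => v x^2) x| ≤ Cv^2 := fun x => by
    simpa [abs_pow] using pow_le_pow_left₀ (abs_nonneg _) (hvb x) 2
  have hA := integrable_mono3 (μ := μ) (hv.pow_const 2) (hu.pow_const 2) measurable_const vsq_b usq_b one_b
  have hB := integrable_mono3 (μ := μ) (hv.pow_const 2) hu hu vsq_b hub hub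
  have hC := integrable_mono3 (μ := μ) (hv.pow_const 2) measurable_const (hu.pow_const 2) vsq_b one_b usq_b
  have hAB : Integrable (fun p => mono3 (fun x => v x^2) (fun x => u x^2) (fun _ : ℝ => (1:ℝ)) p - 2 * mono3 (fun x => v x^2) u u p) (μ.prod (μ.prod μ)) :=
    hA.sub (hB.const_mul 2)
  have hexp : (fun p : ℝ × ℝ × ℝ => (u p.2.1 - u p.2.2)^2 * v p.1^2)
      = fun p => (mono3 (fun x => v x^2) (fun x => u x^2) (fun _ : ℝ => (1:ℝ)) p - 2 * mono3 (fun x => v x^2) u u p) + mono3 (fun x => v x^2) (fun _ : ℝ => (1:ℝ)) (fun x => u x^2) p := by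
    funext p; simp only [mono3]; ring
  constructor
  · rw [hexp]; exact hAB.add hC
  · rw [hexp, integral_add hAB hC, integral_sub hA (hB.const_mul 2),
      integral_const_mul, integral_mono3, integral_mono3, integral_mono3]
    simp only [integral_const, probReal_univ, ENNReal.toReal_one, smul_eq_mul, one_mul, mul_one]
    ring


lemma alg {a1 a2 a3 b1 b2 b3 : ℝ} (ha1 : 0 ≤ a1) (hb1 : 0 ≤ b1)
    (ha12 : a1 ≤ a2) (ha23 : a2 ≤ a3) (hb12 : b1 ≤ b2) (hb23 : b2 ≤ b3) :
    (a1 - a2)^2 * b3^2 + ((a1 - a3)^2 * b2^2 + (a2 - a3)^2 * b1^2)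
      ≤ (a1*b1 - a2*b2)^2 + ((a1*b1 - a3*b3)^2 + (a2*b2 - a3*b3)^2) := by
  have hb2 : 0 ≤ b2 := le_trans hb1 hb12
  have hb3 : 0 ≤ b3 := le_trans hb2 hb23
  have ha2 : 0 ≤ a2 := le_trans ha1 ha12
  have c12 : (a1 - a2)^2 * b2^2 ≤ (a1*b1 - a2*b2)^2 := by
    have h1 : 0 ≤ (a2 - a1) * b2 := mul_nonneg (by linarith) hb2
    have h2 : (a2 - a1) * b2 ≤ a2*b2 - a1*b1 := by nlinarith [mul_nonneg ha1 (sub_nonneg.2 hb12)]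
    calc (a1 - a2)^2 * b2^2 = ((a2 - a1) * b2)^2 := by ring
      _ ≤ (a2*b2 - a1*b1)^2 := pow_le_pow_left₀ h1 h2 2
      _ = (a1*b1 - a2*b2)^2 := by ring
  have c13 : (a1 - a3)^2 * b3^2 ≤ (a1*b1 - a3*b3)^2 := by
    have h1 : 0 ≤ (a3 - a1) * b3 := mul_nonneg (by linarith) hb3
    have h2 : (a3 - a1) * b3 ≤ a3*b3 - a1*b1 := by
      nlinarith [mul_nonneg ha1 (sub_nonneg.2 (le_trans hb12 hb23))]
    calc (a1 - a3)^2 * b3^2 = ((a3 - a1) * b3)^2 := by ring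
      _ ≤ (a3*b3 - a1*b1)^2 := pow_le_pow_left₀ h1 h2 2
      _ = (a1*b1 - a3*b3)^2 := by ring
  have c23 : (a2 - a3)^2 * b3^2 ≤ (a2*b2 - a3*b3)^2 := by
    have h1 : 0 ≤ (a3 - a2) * b3 := mul_nonneg (by linarith) hb3
    have h2 : (a3 - a2) * b3 ≤ a3*b3 - a2*b2 := by nlinarith [mul_nonneg ha2 (sub_nonneg.2 hb23)]
    calc (a2 - a3)^2 * b3^2 = ((a3 - a2) * b3)^2 := by ring
      _ ≤ (a3*b3 - a2*b2)^2 := pow_le_pow_left₀ h1 h2 2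
      _ = (a2*b2 - a3*b3)^2 := by ring
  have hq1 : (a2 - a1)^2 ≤ (a3 - a1)^2 :=
    pow_le_pow_left₀ (by linarith) (by linarith) 2
  have hbsq23 : b2^2 ≤ b3^2 := pow_le_pow_left₀ hb2 hb23 2
  have hbsq13 : b1^2 ≤ b3^2 := pow_le_pow_left₀ hb1 (le_trans hb12 hb23) 2
  have e1 : 0 ≤ ((a3 - a1)^2 - (a2 - a1)^2) * (b3^2 - b2^2) :=
    mul_nonneg (sub_nonneg.2 hq1) (sub_nonneg.2 hbsq23)
  have e2 : 0 ≤ (a2 - a3)^2 * (b3^2 - b1^2) :=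
    mul_nonneg (sq_nonneg _) (sub_nonneg.2 hbsq13)
  nlinarith [c12, c13, c23, e1, e2]

lemma key3 {f g : ℝ → ℝ} (hf : Monotone f) (hg : Monotone g)
    (hf0 : ∀ x, 0 ≤ f x) (hg0 : ∀ x, 0 ≤ g x) (x y z : ℝ) :
    (f x - f y)^2 * g z^2 + ((f x - f z)^2 * g y^2 + (f y - f z)^2 * g x^2)
      ≤ (f x * g x - f y * g y)^2 + ((f x * g x - f z * g z)^2 + (f y * g y - f z * g z)^2) := by
  rcases le_total x y with h1 | h1 <;> rcases le_total y z with h2 | h2 <;>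
    rcases le_total x z with h3 | h3
  · linarith [alg (hf0 x) (hg0 x) (hf h1) (hf h2) (hg h1) (hg h2)]
  · linarith [alg (hf0 x) (hg0 x) (hf h1) (hf h2) (hg h1) (hg h2)]
  · linarith [alg (hf0 x) (hg0 x) (hf h3) (hf h2) (hg h3) (hg h2)]
  · linarith [alg (hf0 z) (hg0 z) (hf h3) (hf h1) (hg h3) (hg h1)]
  · linarith [alg (hf0 y) (hg0 y) (hf h1) (hf h3) (hg h1) (hg h3)]
  · linarith [alg (hf0 y) (hg0 y) (hf h2) (hf h3) (hg h2) (hg h3)]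
  · linarith [alg (hf0 z) (hg0 z) (hf h2) (hf h1) (hg h2) (hg h1)]
  · linarith [alg (hf0 z) (hg0 z) (hf h2) (hf h1) (hg h2) (hg h1)]


lemma core (μ : Measure ℝ) [IsProbabilityMeasure μ] (f g h : ℝ → ℝ)
    (hfm : Monotone f) (hgm : Monotone g)
    (hfg : ∀ x, h x = f x * g x)
    (hf0 : ∀ x, 0 ≤ f x) (hg0 : ∀ x, 0 ≤ g x)
    {Cf Cg : ℝ} (hfb : ∀ x, f x ≤ Cf) (hgb : ∀ x, g x ≤ Cg) :
    ((∫ x, f x^2 ∂μ) - (∫ x, f x ∂μ)^2) * (∫ x, g x^2 ∂μ)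
      ≤ (∫ x, h x^2 ∂μ) - (∫ x, h x ∂μ)^2 := by
  have hf : Measurable f := hfm.measurable
  have hg : Measurable g := hgm.measurable
  have hh : Measurable h := by
    have he : h = fun x => f x * g x := funext hfg
    rw [he]; exact hf.mul hg
  have haf : ∀ x, |f x| ≤ Cf := fun x => by rw [abs_of_nonneg (hf0 x)]; exact hfb x
  have hag : ∀ x, |g x| ≤ Cg := fun x => by rw [abs_of_nonneg (hg0 x)]; exact hgb x
  have hCf : 0 ≤ Cf := le_trans (hf0 0) (hfb 0)
  have hah : ∀ x, |h x| ≤ Cf * Cg := fun x => by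
    rw [hfg, abs_of_nonneg (mul_nonneg (hf0 x) (hg0 x))]
    exact mul_le_mul (hfb x) (hgb x) (hg0 x) hCf
  obtain ⟨iL1, eL1⟩ := pat12 (μ := μ) hh hah
  obtain ⟨iL2, eL2⟩ := pat13 (μ := μ) hh hah
  obtain ⟨iL3, eL3⟩ := pat23 (μ := μ) hh hah
  obtain ⟨iR1, eR1⟩ := pat123 (μ := μ) hf hg haf hag
  obtain ⟨iR2, eR2⟩ := pat132 (μ := μ) hf hg haf hag
  obtain ⟨iR3, eR3⟩ := pat231 (μ := μ) hf hg haf hag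
  have iL23 : Integrable
      (fun p : ℝ × ℝ × ℝ => (h p.1 - h p.2.2)^2 + (h p.2.1 - h p.2.2)^2)
      (μ.prod (μ.prod μ)) := iL2.add iL3
  have iR23 : Integrable
      (fun p : ℝ × ℝ × ℝ => (f p.1 - f p.2.2)^2 * g p.2.1^2 + (f p.2.1 - f p.2.2)^2 * g p.1^2)
      (μ.prod (μ.prod μ)) := iR2.add iR3
  have hpt : ∀ p : ℝ × ℝ × ℝ,
      (f p.1 - f p.2.1)^2 * g p.2.2^2
        + ((f p.1 - f p.2.2)^2 * g p.2.1^2 + (f p.2.1 - f p.2.2)^2 * g p.1^2)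
      ≤ (h p.1 - h p.2.1)^2 + ((h p.1 - h p.2.2)^2 + (h p.2.1 - h p.2.2)^2) := by
    intro p
    have hk := key3 hfm hgm hf0 hg0 p.1 p.2.1 p.2.2
    rw [hfg p.1, hfg p.2.1, hfg p.2.2]
    exact hk
  have hmono : (∫ p : ℝ × ℝ × ℝ, ((f p.1 - f p.2.1)^2 * g p.2.2^2
        + ((f p.1 - f p.2.2)^2 * g p.2.1^2 + (f p.2.1 - f p.2.2)^2 * g p.1^2)) ∂(μ.prod (μ.prod μ)))
      ≤ ∫ p : ℝ × ℝ × ℝ, ((h p.1 - h p.2.1)^2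
        + ((h p.1 - h p.2.2)^2 + (h p.2.1 - h p.2.2)^2)) ∂(μ.prod (μ.prod μ)) :=
    integral_mono (iR1.add iR23) (iL1.add iL23) hpt
  have eL : ∫ p : ℝ × ℝ × ℝ, ((h p.1 - h p.2.1)^2
        + ((h p.1 - h p.2.2)^2 + (h p.2.1 - h p.2.2)^2)) ∂(μ.prod (μ.prod μ))
      = 3 * (2*(∫ x, h x^2 ∂μ) - 2*(∫ x, h x ∂μ)^2) := by
    rw [integral_add iL1 iL23, integral_add iL2 iL3, eL1, eL2, eL3]; ring
  have eR : ∫ p : ℝ × ℝ × ℝ, ((f p.1 - f p.2.1)^2 * g p.2.2^2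
        + ((f p.1 - f p.2.2)^2 * g p.2.1^2 + (f p.2.1 - f p.2.2)^2 * g p.1^2)) ∂(μ.prod (μ.prod μ))
      = 3 * ((2*(∫ x, f x^2 ∂μ) - 2*(∫ x, f x ∂μ)^2) * (∫ x, g x^2 ∂μ)) := by
    rw [integral_add iR1 iR23, integral_add iR2 iR3, eR1, eR2, eR3]; ring
  rw [eL, eR] at hmono
  linarith [hmono]

end VarMulAux

/-- If f, g are bounded nonnegative nondecreasing functions of a real random variable X
on a probability space, then Var[f(X)g(X)] ≥ Var[f(X)] · E[g(X)²]. -/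
theorem variance_mul_ge {Ω : Type*} [MeasureSpace Ω] [IsProbabilityMeasure (ℙ : Measure Ω)]
    (X : Ω → ℝ) (hX : Measurable X)
    (f g : ℝ → ℝ) (hf : Monotone f) (hg : Monotone g)
    (hf0 : ∀ x, 0 ≤ f x) (hg0 : ∀ x, 0 ≤ g x)
    (Cf : ℝ) (hfb : ∀ x, f x ≤ Cf) (Cg : ℝ) (hgb : ∀ x, g x ≤ Cg) :
    variance (fun ω => f (X ω)) ℙ * (∫ ω, (g (X ω)) ^ 2) ≤
      variance (fun ω => f (X ω) * g (X ω)) ℙ := by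
  have hfme : Measurable f := hf.measurable
  have hgme : Measurable g := hg.measurable
  let μ : Measure ℝ := Measure.map X ℙ
  haveI : IsProbabilityMeasure μ := Measure.isProbabilityMeasure_map hX.aemeasurable
  have hCf : 0 ≤ Cf := le_trans (hf0 0) (hfb 0)
  have hF2 : MemLp (fun ω => f (X ω)) 2 ℙ := by
    refine MemLp.mono_exponent
      (memLp_top_of_bound ((hfme.comp hX).aestronglyMeasurable) Cf ?_) le_top
    exact Filter.Eventually.of_forall fun ω => by
      rw [Real.norm_eq_abs, abs_of_nonneg (hf0 _)]; exact hfb _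
  have hH2 : MemLp (fun ω => f (X ω) * g (X ω)) 2 ℙ := by
    refine MemLp.mono_exponent
      (memLp_top_of_bound (((hfme.mul hgme).comp hX).aestronglyMeasurable) (Cf * Cg) ?_) le_top
    exact Filter.Eventually.of_forall fun ω => by
      rw [Real.norm_eq_abs, abs_of_nonneg (mul_nonneg (hf0 _) (hg0 _))]
      exact mul_le_mul (hfb _) (hgb _) (hg0 _) hCf
  rw [variance_eq_sub hF2, variance_eq_sub hH2]
  simp only [Pi.pow_apply]
  have m1 : ∫ ω, f (X ω) ∂ℙ = ∫ x, f x ∂μ :=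
    (integral_map hX.aemeasurable hfme.aestronglyMeasurable).symm
  have m2 : ∫ ω, f (X ω)^2 ∂ℙ = ∫ x, f x^2 ∂μ :=
    (integral_map hX.aemeasurable (hfme.pow_const 2).aestronglyMeasurable).symm
  have m3 : ∫ ω, g (X ω)^2 ∂ℙ = ∫ x, g x^2 ∂μ :=
    (integral_map hX.aemeasurable (hgme.pow_const 2).aestronglyMeasurable).symm
  have m4 : ∫ ω, f (X ω) * g (X ω) ∂ℙ = ∫ x, f x * g x ∂μ :=
    (integral_map hX.aemeasurable (hfme.mul hgme).aestronglyMeasurable).symm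
  have m5 : ∫ ω, (f (X ω) * g (X ω))^2 ∂ℙ = ∫ x, (f x * g x)^2 ∂μ :=
    (integral_map hX.aemeasurable ((hfme.mul hgme).pow_const 2).aestronglyMeasurable).symm
  have key : ((∫ x, f x^2 ∂μ) - (∫ x, f x ∂μ)^2) * (∫ x, g x^2 ∂μ)
      ≤ (∫ x, (f x * g x)^2 ∂μ) - (∫ x, f x * g x ∂μ)^2 :=
    VarMulAux.core μ f g (fun x => f x * g x) hf hg (fun x => rfl) hf0 hg0 hfb hgb
  rw [m1, m2, m3, m4, m5]
  exact key
end

section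
/- If X is a real random variable and f, g : ℝ → ℝ≥0 are bounded nondecreasing functions, then Cov[f(X)g(X), g(X)] ≥ E[f(X)] · Var[g(X)]. -/
open MeasureTheory ProbabilityTheory Set

private lemma int_of_bdd {α : Type*} [MeasurableSpace α] {μ : Measure α} [IsFiniteMeasure μ]
    {h : α → ℝ} (hm : Measurable h) {B : ℝ} (hb : ∀ x, |h x| ≤ B) :
    Integrable h μ :=
  (integrable_const B).mono' hm.aestronglyMeasurable (Filter.Eventually.of_forall hb)

private lemma lemA {Ω : Type*} [MeasureSpace Ω] [IsProbabilityMeasure (ℙ : Measure Ω)]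
    {Y : Ω → ℝ} (hYm : Measurable Y) (hY0 : ∀ ω, 0 ≤ Y ω)
    {CY : ℝ} (hCY : 0 ≤ CY) (hYC : ∀ ω, Y ω ≤ CY)
    {A : Set Ω} (hA : MeasurableSet A)
    (hsep : ∀ ω ∈ A, ∀ ω' ∉ A, Y ω' ≤ Y ω)
    {c : ℝ} (hc : c = ∫ ω, Y ω) :
    (ℙ A).toReal * ∫ ω, Y ω * (Y ω - c) ≤ ∫ ω in A, Y ω * (Y ω - c) := by
  have hYabs : ∀ ω, |Y ω| ≤ CY := fun ω => abs_le.mpr ⟨by linarith [hY0 ω], hYC ω⟩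
  have intY : Integrable Y ℙ := int_of_bdd hYm hYabs
  have intY2 : Integrable (fun ω => Y ω * Y ω) ℙ :=
    int_of_bdd (hYm.mul hYm) (fun ω => by
      rw [abs_mul]; exact mul_le_mul (hYabs ω) (hYabs ω) (abs_nonneg _) hCY)
  set p := (ℙ A).toReal with hp
  set m := ∫ ω in A, Y ω with hm
  have hp0 : 0 ≤ p := ENNReal.toReal_nonneg
  have hp1 : p ≤ 1 := by
    have h1 := prob_le_one (μ := ℙ) (s := A)
    have := ENNReal.toReal_mono (by simp) h1
    simpa using this
  rcases eq_or_ne (ℙ A) 0 with h0 | h0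
  · have e1 : ∫ ω in A, Y ω * (Y ω - c) = 0 := by
      rw [Measure.restrict_eq_zero.mpr h0, integral_zero_measure]
    have e2 : p = 0 := by rw [hp, h0, ENNReal.toReal_zero]
    rw [e1, e2, zero_mul]
  · have hppos : 0 < p := ENNReal.toReal_pos h0 (measure_ne_top _ _)
    have hkey : ∀ ω' ∉ A, p * Y ω' ≤ m := by
      intro ω' hω'
      have h1 : ∫ _ω in A, Y ω' ∂ℙ ≤ ∫ ω in A, Y ω ∂ℙ := by
        apply setIntegral_mono_on (integrableOn_const (measure_ne_top _ _))
          intY.integrableOn hA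
        exact fun ω hω => hsep ω hω ω' hω'
      rw [setIntegral_const] at h1
      simpa [smul_eq_mul, measureReal_def] using h1
    set S1 := ∫ ω in A, Y ω * Y ω with hS1def
    set S2 := ∫ ω in Aᶜ, Y ω * Y ω with hS2def
    have hsplitY : m + ∫ ω in Aᶜ, Y ω = c := by rw [hc]; exact integral_add_compl hA intY
    have hsplitY2 : S1 + S2 = ∫ ω, Y ω * Y ω := integral_add_compl hA intY2
    have hCS : m * m ≤ p * S1 := by
      have h0' : 0 ≤ ∫ ω in A, (p * Y ω - m) ^ 2 := integral_nonneg fun ω => sq_nonneg _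
      have hexp : ∫ ω in A, (p * Y ω - m) ^ 2
          = p ^ 2 * S1 - 2 * p * m * m + m ^ 2 * p := by
        have e : (fun ω => (p * Y ω - m) ^ 2)
            = fun ω => p ^ 2 * (Y ω * Y ω) - 2 * p * m * Y ω + m ^ 2 := by
          funext ω; ring
        have i1 : IntegrableOn (fun ω => p ^ 2 * (Y ω * Y ω) - 2 * p * m * Y ω) A ℙ :=
          ((intY2.const_mul _).sub (intY.const_mul _)).integrableOn
        have i2 : IntegrableOn (fun _ : Ω => m ^ 2) A ℙ :=
          integrableOn_const (measure_ne_top _ _)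
        have i3 : IntegrableOn (fun ω => p ^ 2 * (Y ω * Y ω)) A ℙ :=
          (intY2.const_mul _).integrableOn
        have i4 : IntegrableOn (fun ω => 2 * p * m * Y ω) A ℙ :=
          (intY.const_mul _).integrableOn
        rw [e, integral_add i1 i2, integral_sub i3 i4,
          integral_const_mul, integral_const_mul, setIntegral_const]
        rw [← hS1def, ← hm, measureReal_def, ← hp, smul_eq_mul]
        ring
      nlinarith [h0', hexp, hppos]
    have hS2b : p * S2 ≤ m * (c - m) := by
      have h1 : ∫ ω in Aᶜ, p * (Y ω * Y ω) ≤ ∫ ω in Aᶜ, m * Y ω := by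
        apply setIntegral_mono_on ((intY2.const_mul p).integrableOn)
          ((intY.const_mul m).integrableOn) hA.compl
        intro ω hω
        have h2 := hkey ω (by simpa using hω)
        nlinarith [hY0 ω]
      rw [integral_const_mul, integral_const_mul] at h1
      have h3 : ∫ ω in Aᶜ, Y ω = c - m := by linarith [hsplitY]
      rw [h3] at h1
      exact h1
    have eA : ∫ ω in A, Y ω * (Y ω - c) = S1 - c * m := by
      have e : (fun ω => Y ω * (Y ω - c)) = fun ω => Y ω * Y ω - c * Y ω := by funext ω; ring
      have i4 : IntegrableOn (fun ω => c * Y ω) A ℙ := (intY.const_mul c).integrableOn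
      rw [e, integral_sub intY2.integrableOn i4, integral_const_mul, ← hS1def, ← hm]
    have eAll : ∫ ω, Y ω * (Y ω - c) = S1 + S2 - c * c := by
      have e : (fun ω => Y ω * (Y ω - c)) = fun ω => Y ω * Y ω - c * Y ω := by funext ω; ring
      have i4 : Integrable (fun ω => c * Y ω) ℙ := intY.const_mul c
      rw [e, integral_sub intY2 i4, integral_const_mul, ← hc, ← hsplitY2]
    rw [eA, eAll]
    nlinarith [hCS, hS2b, hppos, hp1, sq_nonneg (m - p * c),
      mul_nonneg (sub_nonneg.mpr hp1) (sub_nonneg.mpr hCS),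
      mul_nonneg hp0 (sub_nonneg.mpr hS2b)]

private lemma lemB {Ω : Type*} [MeasureSpace Ω] [IsProbabilityMeasure (ℙ : Measure Ω)]
    {F Y : Ω → ℝ} (hFm : Measurable F) (hYm : Measurable Y)
    (hF0 : ∀ ω, 0 ≤ F ω) (hY0 : ∀ ω, 0 ≤ Y ω)
    {Cf Cg : ℝ} (hFC : ∀ ω, F ω ≤ Cf) (hYC : ∀ ω, Y ω ≤ Cg)
    (hcm : ∀ ω ω', F ω' < F ω → Y ω' ≤ Y ω) :
    (∫ ω, F ω) * ((∫ ω, Y ω * Y ω) - (∫ ω, Y ω) * (∫ ω, Y ω)) ≤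
      (∫ ω, F ω * Y ω * Y ω) - (∫ ω, F ω * Y ω) * (∫ ω, Y ω) := by
  have hne : Nonempty Ω := by
    by_contra h
    rw [not_nonempty_iff] at h
    have h1 : (ℙ : Measure Ω) Set.univ = 1 := measure_univ
    rw [Set.univ_eq_empty_iff.mpr h, measure_empty] at h1
    exact zero_ne_one h1
  obtain ⟨ω₀⟩ := hne
  have hCf0 : 0 ≤ Cf := (hF0 ω₀).trans (hFC ω₀)
  have hCg0 : 0 ≤ Cg := (hY0 ω₀).trans (hYC ω₀)
  have hFabs : ∀ ω, |F ω| ≤ Cf := fun ω => abs_le.mpr ⟨by linarith [hF0 ω], hFC ω⟩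
  have hYabs : ∀ ω, |Y ω| ≤ Cg := fun ω => abs_le.mpr ⟨by linarith [hY0 ω], hYC ω⟩
  have intF : Integrable F ℙ := int_of_bdd hFm hFabs
  have intY : Integrable Y ℙ := int_of_bdd hYm hYabs
  have intY2 : Integrable (fun ω => Y ω * Y ω) ℙ :=
    int_of_bdd (hYm.mul hYm) fun ω => by
      rw [abs_mul]; exact mul_le_mul (hYabs ω) (hYabs ω) (abs_nonneg _) hCg0
  have intFY : Integrable (fun ω => F ω * Y ω) ℙ :=
    int_of_bdd (hFm.mul hYm) fun ω => by
      rw [abs_mul]; exact mul_le_mul (hFabs ω) (hYabs ω) (abs_nonneg _) hCf0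
  have intFY2 : Integrable (fun ω => F ω * Y ω * Y ω) ℙ :=
    int_of_bdd ((hFm.mul hYm).mul hYm) fun ω => by
      rw [abs_mul, abs_mul]
      exact mul_le_mul (mul_le_mul (hFabs ω) (hYabs ω) (abs_nonneg _) hCf0) (hYabs ω)
        (abs_nonneg _) (mul_nonneg hCf0 hCg0)
  set a := ∫ ω, F ω with ha
  set c := ∫ ω, Y ω with hc
  have intψ : Integrable (fun ω => Y ω * (Y ω - c)) ℙ := by
    have e : (fun ω => Y ω * (Y ω - c)) = fun ω => Y ω * Y ω - c * Y ω := by funext ω; ring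
    rw [e]; exact intY2.sub (intY.const_mul c)
  have hψb : ∀ ω, |Y ω * (Y ω - c)| ≤ Cg * (Cg + |c|) := by
    intro ω
    rw [abs_mul]
    refine mul_le_mul (hYabs ω) ?_ (abs_nonneg _) hCg0
    calc |Y ω - c| ≤ |Y ω| + |c| := abs_sub _ _
      _ ≤ Cg + |c| := by linarith [hYabs ω]
  -- the layer-cake measure
  set μs : Measure ℝ := volume.restrict (Set.Ico (0:ℝ) Cf) with hμs
  haveI : IsFiniteMeasure μs := by
    constructor
    rw [hμs, Measure.restrict_apply_univ, Real.volume_Ico]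
    exact ENNReal.ofReal_lt_top
  have hAs : ∀ s : ℝ, MeasurableSet {ω | s < F ω} := fun s =>
    measurableSet_lt measurable_const hFm
  set P : ℝ → ℝ := fun s => (ℙ {ω | s < F ω}).toReal with hP
  have hPanti : Antitone P := by
    intro s t hst
    exact ENNReal.toReal_mono (measure_ne_top _ _)
      (measure_mono fun ω hω => lt_of_le_of_lt hst hω)
  have hPm : Measurable P := hPanti.measurable
  have hP0 : ∀ s, 0 ≤ P s := fun s => ENNReal.toReal_nonneg
  have hP1 : ∀ s, P s ≤ 1 := by
    intro s
    have h1 := prob_le_one (μ := ℙ) (s := {ω | s < F ω})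
    have := ENNReal.toReal_mono (by simp) h1
    simpa using this
  have intχ : ∀ ω, Integrable (fun s => if s < F ω then (1:ℝ) else 0) μs := by
    intro ω
    refine int_of_bdd (Measurable.ite measurableSet_Iio measurable_const measurable_const)
      (B := 1) fun s => ?_
    by_cases h : s < F ω <;> simp [h]
  have intP : Integrable P μs := int_of_bdd hPm fun s => abs_le.mpr ⟨by linarith [hP0 s], hP1 s⟩
  have hone : ∀ ω, ∫ s, (if s < F ω then (1:ℝ) else 0) ∂μs = F ω := by
    intro ω
    have h1 : (fun s => if s < F ω then (1:ℝ) else 0)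
        = (Iio (F ω)).indicator (fun _ => (1:ℝ)) := by
      funext s; simp [indicator_apply, mem_Iio]
    rw [h1, integral_indicator measurableSet_Iio, hμs,
      Measure.restrict_restrict measurableSet_Iio]
    have hset : Iio (F ω) ∩ Ico (0:ℝ) Cf = Ico 0 (F ω) := by
      ext s
      simp only [mem_inter_iff, mem_Iio, mem_Ico]
      constructor
      · rintro ⟨h1, h2, h3⟩; exact ⟨h2, h1⟩
      · rintro ⟨h1, h2⟩; exact ⟨h2, h1, lt_of_lt_of_le h2 (hFC ω)⟩
    rw [hset, setIntegral_const, smul_eq_mul, mul_one, measureReal_def, Real.volume_Ico,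
      ENNReal.toReal_ofReal (by linarith [hF0 ω])]
    ring
  have hPeq : ∀ s, ∫ ω, (if s < F ω then (1:ℝ) else 0) = P s := by
    intro s
    have h1 : (fun ω => if s < F ω then (1:ℝ) else 0)
        = {ω | s < F ω}.indicator (fun _ => (1:ℝ)) := by
      funext ω; simp [indicator_apply]
    rw [h1, integral_indicator (hAs s), setIntegral_const, smul_eq_mul, mul_one, measureReal_def, hP]
  have hM : MeasurableSet {q : ℝ × Ω | q.1 < F q.2} :=
    measurableSet_lt measurable_fst (hFm.comp measurable_snd)
  have hintP : ∫ s, P s ∂μs = a := by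
    have hint : Integrable (Function.uncurry fun (s : ℝ) (ω : Ω) =>
        if s < F ω then (1:ℝ) else 0) (μs.prod ℙ) := by
      refine int_of_bdd (Measurable.ite ?_ measurable_const measurable_const) (B := 1)
        fun q => ?_
      · exact hM
      · by_cases h : q.1 < F q.2 <;> simp [Function.uncurry, h]
    have hswap := integral_integral_swap hint
    simp only [hPeq, hone] at hswap
    rw [hswap, ha]
  have key : ∀ ω, F ω - a = ∫ s, ((if s < F ω then (1:ℝ) else 0) - P s) ∂μs := by
    intro ω
    rw [integral_sub (intχ ω) intP, hone ω, hintP]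
  -- the double integral
  have hprodInt : Integrable (Function.uncurry fun (ω : Ω) (s : ℝ) =>
      ((if s < F ω then (1:ℝ) else 0) - P s) * (Y ω * (Y ω - c))) ((ℙ : Measure Ω).prod μs) := by
    refine int_of_bdd ?_ (B := 1 * (Cg * (Cg + |c|))) fun q => ?_
    · apply Measurable.mul
      · apply Measurable.sub
        · exact Measurable.ite (measurableSet_lt measurable_snd (hFm.comp measurable_fst))
            measurable_const measurable_const
        · exact hPm.comp measurable_snd
      · exact ((hYm.comp measurable_fst).mul
          ((hYm.comp measurable_fst).sub measurable_const))
    · rw [Function.uncurry, abs_mul]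
      refine mul_le_mul ?_ (hψb q.1) (abs_nonneg _) zero_le_one
      rcases le_or_gt (F q.1) q.2 with h | h
      · rw [if_neg (not_lt.mpr h), zero_sub, abs_neg]
        exact abs_le.mpr ⟨by linarith [hP0 q.2], hP1 q.2⟩
      · rw [if_pos h]
        exact abs_le.mpr ⟨by linarith [hP1 q.2], by linarith [hP0 q.2]⟩
  have hT : 0 ≤ ∫ ω, (F ω - a) * (Y ω * (Y ω - c)) := by
    have e1 : ∫ ω, (F ω - a) * (Y ω * (Y ω - c))
        = ∫ ω, ∫ s, ((if s < F ω then (1:ℝ) else 0) - P s) * (Y ω * (Y ω - c)) ∂μs := by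
      apply integral_congr_ae
      filter_upwards with ω
      rw [key ω, ← integral_mul_const]
    have e2 := integral_integral_swap hprodInt
    rw [e1, e2]
    refine integral_nonneg fun s => ?_
    simp only [Pi.zero_apply]
    show (0:ℝ) ≤ ∫ ω, ((if s < F ω then (1:ℝ) else 0) - P s) * (Y ω * (Y ω - c))
    have e3 : ∫ ω, ((if s < F ω then (1:ℝ) else 0) - P s) * (Y ω * (Y ω - c))
        = (∫ ω in {ω | s < F ω}, Y ω * (Y ω - c)) - P s * ∫ ω, Y ω * (Y ω - c) := by
      have e4 : (fun ω => ((if s < F ω then (1:ℝ) else 0) - P s) * (Y ω * (Y ω - c)))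
          = fun ω => {ω' | s < F ω'}.indicator (fun ω' => Y ω' * (Y ω' - c)) ω
            - P s * (Y ω * (Y ω - c)) := by
        funext ω
        by_cases h : s < F ω <;>
          simp [indicator_apply, h, sub_mul]
      rw [e4]
      have i1 : Integrable ({ω' | s < F ω'}.indicator (fun ω' => Y ω' * (Y ω' - c))) ℙ :=
        intψ.indicator (hAs s)
      have i2 : Integrable (fun ω => P s * (Y ω * (Y ω - c))) ℙ := intψ.const_mul _
      rw [integral_sub i1 i2, integral_indicator (hAs s), integral_const_mul]
    rw [e3]
    have hsep : ∀ ω ∈ {ω | s < F ω}, ∀ ω' ∉ {ω | s < F ω}, Y ω' ≤ Y ω := by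
      intro ω hω ω' hω'
      exact hcm ω ω' (lt_of_le_of_lt (not_lt.mp hω') hω)
    have := lemA hYm hY0 hCg0 hYC (hAs s) hsep hc
    rw [hP]
    linarith [this]
  -- expand T
  have hexp : ∫ ω, (F ω - a) * (Y ω * (Y ω - c))
      = (∫ ω, F ω * Y ω * Y ω) - c * (∫ ω, F ω * Y ω) - a * (∫ ω, Y ω * Y ω) + a * (c * c) := by
    have e : (fun ω => (F ω - a) * (Y ω * (Y ω - c)))
        = fun ω => (F ω * Y ω * Y ω - c * (F ω * Y ω)) - (a * (Y ω * Y ω) - a * c * Y ω) := by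
      funext ω; ring
    have i1 : Integrable (fun ω => F ω * Y ω * Y ω - c * (F ω * Y ω)) ℙ :=
      intFY2.sub (intFY.const_mul c)
    have i2 : Integrable (fun ω => a * (Y ω * Y ω) - a * c * Y ω) ℙ :=
      (intY2.const_mul a).sub (intY.const_mul (a * c))
    have i3 : Integrable (fun ω => c * (F ω * Y ω)) ℙ := intFY.const_mul c
    have i4 : Integrable (fun ω => a * (Y ω * Y ω)) ℙ := intY2.const_mul a
    have i5 : Integrable (fun ω => a * c * Y ω) ℙ := intY.const_mul (a * c)
    rw [e, integral_sub i1 i2, integral_sub intFY2 i3, integral_sub i4 i5,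
      integral_const_mul, integral_const_mul, integral_const_mul, ← hc]
    ring
  nlinarith [hT, hexp]


/-- If f, g are bounded nonnegative nondecreasing functions of a real random variable X,
then Cov[f(X)g(X), g(X)] ≥ E[f(X)] · Var[g(X)], where Cov[U,V] = E[UV] − E[U]E[V]. -/
theorem cov_mul_ge {Ω : Type*} [MeasureSpace Ω] [IsProbabilityMeasure (ℙ : Measure Ω)]
    (X : Ω → ℝ) (hX : Measurable X)
    (f g : ℝ → ℝ) (hf : Monotone f) (hg : Monotone g)
    (hf0 : ∀ x, 0 ≤ f x) (hg0 : ∀ x, 0 ≤ g x)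
    (Cf : ℝ) (hfb : ∀ x, f x ≤ Cf) (Cg : ℝ) (hgb : ∀ x, g x ≤ Cg) :
    (∫ ω, f (X ω)) * variance (fun ω => g (X ω)) ℙ ≤
      (∫ ω, (f (X ω) * g (X ω)) * g (X ω)) -
        (∫ ω, f (X ω) * g (X ω)) * (∫ ω, g (X ω)) := by
  have hYm : Measurable fun ω => g (X ω) := hg.measurable.comp hX
  have hFm : Measurable fun ω => f (X ω) := hf.measurable.comp hX
  have hmem : MemLp (fun ω => g (X ω)) 2 ℙ :=
    (memLp_top_of_bound hYm.aestronglyMeasurable Cg (Filter.Eventually.of_forall fun ω => by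
      rw [Real.norm_eq_abs]
      exact abs_le.mpr ⟨by linarith [hg0 (X ω), hgb (X ω)], hgb _⟩)).mono_exponent le_top
  have hvar := variance_eq_sub (μ := ℙ) hmem
  have hcomon : ∀ ω ω' : Ω, f (X ω') < f (X ω) → g (X ω') ≤ g (X ω) := by
    intro ω ω' hlt
    refine hg ?_
    by_contra hx
    push_neg at hx
    exact absurd (hf hx.le) (not_le.mpr hlt)
  have hkey := lemB (F := fun ω => f (X ω)) (Y := fun ω => g (X ω)) hFm hYm
    (fun ω => hf0 _) (fun ω => hg0 _) (fun ω => hfb _) (fun ω => hgb _) hcomon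
  have hkey' : (∫ ω, f (X ω)) * ((∫ ω, g (X ω) * g (X ω)) - (∫ ω, g (X ω)) * ∫ ω, g (X ω)) ≤
      (∫ ω, f (X ω) * g (X ω) * g (X ω)) - (∫ ω, f (X ω) * g (X ω)) * ∫ ω, g (X ω) := hkey
  have e2 : (∫ x, ((fun ω => g (X ω)) ^ 2) x) = ∫ ω, g (X ω) * g (X ω) := by
    apply integral_congr_ae
    filter_upwards with ω
    simp [pow_two]
  rw [hvar, e2]
  nlinarith [hkey']
end

section
/- Let p, q : ℝ → ℝ>0 be differentiable with p'(y) = −f_p(y−μ_p)·p(y) and q'(y) = −f_q(y−μ_q)·q(y), where f_p, f_q are strictly increasing with f_p(0) = f_q(0) = 0, and μ_p < μ_q. Define, for a finite set of points {y_j}, w(y) = −Σ_{j} (p(y)/(p(y)+p(y_j)) − q(y)/(q(y)+q(y_j))). Then no critical point y* of w satisfies μ_p < y* < μ_q; moreover w'(μ_p) > 0 and w'(μ_q) > 0. -/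
open Finset

/-- Under distribution shift (μ_p < μ_q), no critical point of the DPO aggregate weight
w(y) = −Σ_j (p(y)/(p(y)+p(y_j)) − q(y)/(q(y)+q(y_j))) lies strictly between μ_p and μ_q,
and w'(μ_p) > 0, w'(μ_q) > 0. -/
theorem dpo_weight_no_interior_extremum
    (p q : ℝ → ℝ) (hp : ∀ y, 0 < p y) (hq : ∀ y, 0 < q y)
    (fp fq : ℝ → ℝ) (hfp : StrictMono fp) (hfq : StrictMono fq)
    (hfp0 : fp 0 = 0) (hfq0 : fq 0 = 0)
    (μp μq : ℝ) (hμ : μp < μq)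
    (hp' : ∀ y, HasDerivAt p (-fp (y - μp) * p y) y)
    (hq' : ∀ y, HasDerivAt q (-fq (y - μq) * q y) y)
    (n : ℕ) (hn : 0 < n) (ys : Fin n → ℝ)
    (w : ℝ → ℝ)
    (hw : ∀ y, w y = -∑ j, (p y / (p y + p (ys j)) - q y / (q y + q (ys j)))) :
    (∀ y, deriv w y = 0 → ¬(μp < y ∧ y < μq)) ∧
      0 < deriv w μp ∧ 0 < deriv w μq := by
  have key : ∀ y, HasDerivAt w
      (∑ j, (fp (y - μp) * (p y * p (ys j) / (p y + p (ys j)) ^ 2)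
            - fq (y - μq) * (q y * q (ys j) / (q y + q (ys j)) ^ 2))) y := by
    intro y
    have hfun : w = fun y => -∑ j, (p y / (p y + p (ys j)) - q y / (q y + q (ys j))) :=
      funext hw
    rw [hfun]
    have hterm : ∀ j : Fin n, HasDerivAt
        (fun y => p y / (p y + p (ys j)) - q y / (q y + q (ys j)))
        (-(fp (y - μp) * (p y * p (ys j) / (p y + p (ys j)) ^ 2))
          + fq (y - μq) * (q y * q (ys j) / (q y + q (ys j)) ^ 2)) y := by
      intro j
      have hpne : p y + p (ys j) ≠ 0 := by have := hp y; have := hp (ys j); positivity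
      have hqne : q y + q (ys j) ≠ 0 := by have := hq y; have := hq (ys j); positivity
      have hpd : HasDerivAt (fun y => p y / (p y + p (ys j)))
          (-(fp (y - μp) * (p y * p (ys j) / (p y + p (ys j)) ^ 2))) y := by
        have h1 := (hp' y).fun_div ((hp' y).add_const (p (ys j))) hpne
        refine h1.congr_deriv ?_
        field_simp
        ring
      have hqd : HasDerivAt (fun y => q y / (q y + q (ys j)))
          (-(fq (y - μq) * (q y * q (ys j) / (q y + q (ys j)) ^ 2))) y := by
        have h1 := (hq' y).fun_div ((hq' y).add_const (q (ys j))) hqne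
        refine h1.congr_deriv ?_
        field_simp
        ring
      simpa [sub_eq_add_neg] using hpd.fun_sub hqd
    have hsum := (HasDerivAt.fun_sum (u := Finset.univ) (fun j _ => hterm j)).fun_neg
    refine hsum.congr_deriv ?_
    rw [← Finset.sum_neg_distrib]
    exact Finset.sum_congr rfl (fun j _ => by ring)
  have dpos : ∀ y, μp ≤ y → y ≤ μq → 0 < deriv w y := by
    intro y h1 h2
    rw [(key y).deriv]
    apply Finset.sum_pos _ (Finset.univ_nonempty_iff.mpr ⟨⟨0, hn⟩⟩)
    intro j _
    have hA : 0 < p y * p (ys j) / (p y + p (ys j)) ^ 2 := by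
      have := hp y; have := hp (ys j); positivity
    have hB : 0 < q y * q (ys j) / (q y + q (ys j)) ^ 2 := by
      have := hq y; have := hq (ys j); positivity
    have hfpnn : 0 ≤ fp (y - μp) := by
      rw [← hfp0]; exact hfp.monotone (by linarith)
    have hfqnp : fq (y - μq) ≤ 0 := by
      rw [← hfq0]; exact hfq.monotone (by linarith)
    rcases lt_or_eq_of_le h1 with h1' | h1'
    · have hpos : 0 < fp (y - μp) := by rw [← hfp0]; exact hfp (by linarith)
      nlinarith
    · have hneg : fq (y - μq) < 0 := by rw [← hfq0]; exact hfq (by linarith)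
      nlinarith
  refine ⟨fun y hy ⟨ha, hb⟩ => ?_, dpos μp le_rfl hμ.le, dpos μq hμ.le le_rfl⟩
  exact absurd hy (ne_of_gt (dpos y ha.le hb.le))
end
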